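/- Let w be a Baxter permutation of length n fixed under half-turn (180°) rotation, and let p ∈ {1,…,n+1} be a position such that inserting a new largest label n+1 at position p into w yields a Baxter permutation. Then there exists a position q such that first inserting n+1 at position p into w and then inserting a new smallest label 1 at position q into the result yields a Baxter permutation of length n+2 that is fixed under half-turn rotation. -/

import Mathlib

/-- The entry of the word `l` at (1-indexed) position `i`, i.e. `w(i)`. -/
def entry (l : List ℕ) (i : ℕ) : ℕ := l.getD (i - 1) 0

/-- `l` is the one-line notation of a permutation of `{1,…,n}`. -/
def IsPermWord (n : ℕ) (l : List ℕ) : Prop := l.Perm (List.range' 1 n)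

/-- `l` is a Baxter permutation of length `n`: a permutation of `{1,…,n}`
avoiding the vincular patterns 3-14-2 and 2-41-3. -/
def IsBaxter (n : ℕ) (l : List ℕ) : Prop :=
  IsPermWord n l ∧
  (¬ ∃ i j k, 1 ≤ i ∧ i < j ∧ j + 1 < k ∧ k ≤ n ∧
      entry l j < entry l k ∧ entry l k < entry l i ∧ entry l i < entry l (j + 1)) ∧
  (¬ ∃ i j k, 1 ≤ i ∧ i < j ∧ j + 1 < k ∧ k ≤ n ∧
      entry l (j + 1) < entry l i ∧ entry l i < entry l k ∧ entry l k < entry l j)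

/-- `l` is fixed under quarter-turn (90°) rotation of its permutation matrix:
`w(w(i)) = n+1-i` for all `i ∈ {1,…,n}`. -/
def QuarterFixed (n : ℕ) (l : List ℕ) : Prop :=
  ∀ i, 1 ≤ i → i ≤ n → entry l (entry l i) = n + 1 - i

/-- `l` is fixed under half-turn (180°) rotation of its permutation matrix:
`w(n+1-i) = n+1-w(i)` for all `i ∈ {1,…,n}`. -/
def HalfFixed (n : ℕ) (l : List ℕ) : Prop :=
  ∀ i, 1 ≤ i → i ≤ n → entry l (n + 1 - i) = n + 1 - entry l i

/-- The entry at position `i` is a left-to-right maximum. -/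
def LRMaxAt (l : List ℕ) (i : ℕ) : Prop := ∀ k, 1 ≤ k → k < i → entry l k < entry l i

/-- The entry at position `i` is a right-to-left maximum. -/
def RLMaxAt (n : ℕ) (l : List ℕ) (i : ℕ) : Prop := ∀ k, i < k → k ≤ n → entry l k < entry l i

/-- The entry at position `i` is a left-to-right minimum. -/
def LRMinAt (l : List ℕ) (i : ℕ) : Prop := ∀ k, 1 ≤ k → k < i → entry l i < entry l k

/-- The entry at position `i` is a right-to-left minimum. -/
def RLMinAt (n : ℕ) (l : List ℕ) (i : ℕ) : Prop := ∀ k, i < k → k ≤ n → entry l i < entry l k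

/-- The (1-indexed) position of the value `v` in `l`, i.e. `w⁻¹(v)`. -/
def pos (l : List ℕ) (v : ℕ) : ℕ := l.idxOf v + 1

/-- The one-line notation of the inverse of the permutation `l` of `{1,…,n}`. -/
def invWord (n : ℕ) (l : List ℕ) : List ℕ := (List.range' 1 n).map (pos l)

/-- The number of descents of a permutation word of length `n`:
indices `i ∈ {1,…,n-1}` with `w(i) > w(i+1)`. -/
noncomputable def des (n : ℕ) (l : List ℕ) : ℕ :=
  {i : ℕ | 1 ≤ i ∧ i + 1 ≤ n ∧ entry l (i + 1) < entry l i}.ncard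

/-- Insert a new largest label `n+1` at (1-indexed) position `p`
in the permutation `l` of `{1,…,n}`. -/
def insertMax (n p : ℕ) (l : List ℕ) : List ℕ := l.insertIdx (p - 1) (n + 1)

/-- Insert a new smallest label `1` at (1-indexed) position `p`
(all old labels get increased by 1). -/
def insertMin (p : ℕ) (l : List ℕ) : List ℕ := (l.map (· + 1)).insertIdx (p - 1) 1

/-- Append the value `j` at the end of the permutation `l`
(old labels `≥ j` get increased by 1). -/
def appendEnd (j : ℕ) (l : List ℕ) : List ℕ :=
  (l.map (fun x => if x < j then x else x + 1)) ++ [j]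

/-- Standardize a word with distinct entries: replace the entries by `1,…,m` preserving
relative order (each entry is replaced by the number of entries less than or equal to it). -/
def standardize (l : List ℕ) : List ℕ := l.map (fun x => (l.filter (fun y => y ≤ x)).length)

/- ## Auxiliary lemmas -/

lemma entry_eq_getElem' (l : List ℕ) (i : ℕ) (h : i - 1 < l.length) :
    entry l i = l[i-1] := by
  simp [entry, List.getD_eq_getElem?_getD, List.getElem?_eq_getElem h]

lemma entry_eq_zero' (l : List ℕ) (i : ℕ) (h : l.length ≤ i - 1) : entry l i = 0 := by
  simp [entry, List.getD_eq_getElem?_getD, List.getElem?_eq_none h]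

lemma permword_length {n : ℕ} {l : List ℕ} (h : IsPermWord n l) : l.length = n := by
  simpa using h.length_eq

lemma entry_bounds {n : ℕ} {l : List ℕ} (h : IsPermWord n l) {i : ℕ} (h1 : 1 ≤ i) (h2 : i ≤ n) :
    1 ≤ entry l i ∧ entry l i ≤ n := by
  have hl := permword_length h
  have hi : i - 1 < l.length := by omega
  rw [entry_eq_getElem' l i hi]
  have hm : l[i-1] ∈ List.range' 1 n := h.mem_iff.mp (l.getElem_mem hi)
  rw [List.mem_range'_1] at hm
  omega

lemma entry_le {n : ℕ} {l : List ℕ} (h : IsPermWord n l) (i : ℕ) : entry l i ≤ n := by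
  by_cases hi : i - 1 < l.length
  · rw [entry_eq_getElem' l i hi]
    have hm : l[i-1] ∈ List.range' 1 n := h.mem_iff.mp (l.getElem_mem hi)
    rw [List.mem_range'_1] at hm; omega
  · rw [entry_eq_zero' l i (by omega)]; omega

lemma entry_inj {n : ℕ} {l : List ℕ} (h : IsPermWord n l) {a b : ℕ}
    (ha1 : 1 ≤ a) (ha2 : a ≤ n) (hb1 : 1 ≤ b) (hb2 : b ≤ n) (he : entry l a = entry l b) :
    a = b := by
  have hl := permword_length h
  have hnd : l.Nodup := h.nodup_iff.mpr (List.nodup_range' (s := 1) (n := n))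
  rw [entry_eq_getElem' l a (by omega), entry_eq_getElem' l b (by omega)] at he
  have := hnd.getElem_inj_iff.mp he
  omega

lemma entry_insertIdx (xs : List ℕ) (k a i : ℕ) (hk : k ≤ xs.length) (h1 : 1 ≤ i) :
    entry (xs.insertIdx k a) i =
      if i ≤ k then entry xs i else if i = k + 1 then a else entry xs (i - 1) := by
  have hlen : (xs.insertIdx k a).length = xs.length + 1 := List.length_insertIdx_of_le_length hk a
  rcases Nat.lt_trichotomy i (k+1) with hc | hc | hc
  · rw [if_pos (by omega), entry_eq_getElem' _ i (by omega),
      entry_eq_getElem' _ i (by omega)]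
    exact List.getElem_insertIdx_of_lt (by omega) (by omega)
  · rw [if_neg (by omega), if_pos (by omega), entry_eq_getElem' _ i (by omega)]
    have : i - 1 = k := by omega
    simp only [this]
    exact List.getElem_insertIdx_self (by omega)
  · rw [if_neg (by omega), if_neg (by omega)]
    by_cases hr : i - 1 < xs.length + 1
    · rw [entry_eq_getElem' _ i (by omega), entry_eq_getElem' _ (i-1) (by omega)]
      have h2 : i - 1 = k + (i - 2 - k) + 1 := by omega
      have h3 : i - 1 - 1 = k + (i - 2 - k) := by omega
      simp only [h2, h3]
      exact List.getElem_insertIdx_add_succ xs a k (i-2-k) (by omega)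
    · rw [entry_eq_zero' _ i (by omega), entry_eq_zero' _ (i-1) (by omega)]

lemma entry_map_succ (v : List ℕ) (i : ℕ) (h1 : 1 ≤ i) (h2 : i ≤ v.length) :
    entry (v.map (· + 1)) i = entry v i + 1 := by
  rw [entry_eq_getElem' _ i (by simp; omega), entry_eq_getElem' v i (by omega)]
  simp

lemma permword_insertMin {m : ℕ} {v : List ℕ} (hv : IsPermWord m v) {q : ℕ}
    (hq2 : q ≤ m + 1) : IsPermWord (m+1) (insertMin q v) := by
  have hl := permword_length hv
  have h1 : List.Perm ((v.map (· + 1)).insertIdx (q-1) 1) (1 :: v.map (· + 1)) :=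
    List.perm_insertIdx 1 _ (by simp; omega)
  have h2 : List.Perm (v.map (· + 1)) ((List.range' 1 m).map (· + 1)) := hv.map _
  have h3 : (List.range' 1 m).map (· + 1) = List.range' 2 m := by
    have := List.map_add_range' (a := 1) 1 m 1
    simpa [Nat.add_comm] using this
  have h4 : List.range' 1 (m+1) = 1 :: List.range' 2 m := List.range'_succ
  unfold IsPermWord insertMin
  rw [h4]
  exact h1.trans ((h2.trans (by rw [h3])).cons 1)

lemma entry_insertMin {m : ℕ} {v : List ℕ} (hv : IsPermWord m v) {q : ℕ}
    (hq1 : 1 ≤ q) (hq2 : q ≤ m + 1) (i : ℕ) (h1 : 1 ≤ i) (h2 : i ≤ m + 1) :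
    entry (insertMin q v) i =
      if i < q then entry v i + 1 else if i = q then 1 else entry v (i-1) + 1 := by
  have hl := permword_length hv
  have hm : (v.map (· + 1)).length = m := by simp [hl]
  rw [insertMin, entry_insertIdx _ (q-1) 1 i (by omega) h1]
  rcases Nat.lt_trichotomy i q with hc | hc | hc
  · rw [if_pos (by omega), if_pos hc, entry_map_succ v i h1 (by omega)]
  · rw [if_neg (by omega), if_pos (by omega), if_neg (by omega), if_pos hc]
  · rw [if_neg (by omega), if_neg (by omega), if_neg (by omega), if_neg (by omega),
      entry_map_succ v (i-1) (by omega) (by omega)]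

lemma isBaxter_insertMin {m q : ℕ} {v : List ℕ} (hv : IsBaxter m v)
    (hq1 : 1 ≤ q) (hq2 : q ≤ m + 1)
    (hC1 : ¬ ∃ i k, 1 ≤ i ∧ i < q ∧ q < k ∧ k ≤ m ∧
      entry v k < entry v i ∧ entry v i < entry v q)
    (hC2 : ¬ ∃ i k, 1 ≤ i ∧ i + 1 < q ∧ q ≤ k ∧ k ≤ m ∧
      entry v i < entry v k ∧ entry v k < entry v (q - 1)) :
    IsBaxter (m + 1) (insertMin q v) := by
  obtain ⟨hvP, hv1, hv2⟩ := hv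
  have hE := entry_insertMin hvP hq1 hq2
  have hwq : entry (insertMin q v) q = 1 := by
    rw [hE q hq1 hq2, if_neg (by omega), if_pos rfl]
  have hwne : ∀ x, 1 ≤ x → x ≤ m + 1 → q ≠ x →
      entry (insertMin q v) x = entry v (if x < q then x else x - 1) + 1 := by
    intro x hx1 hx2 hx3
    rw [hE x hx1 hx2]
    by_cases hc : x < q
    · rw [if_pos hc, if_pos hc]
    · rw [if_neg hc, if_neg (by omega), if_neg hc]
  refine ⟨permword_insertMin hvP hq2, ?_, ?_⟩
  · rintro ⟨i, j, k, h1, h2, h3, h4, e1, e2, e3⟩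
    by_cases hqi : q = i
    · rw [← hqi, hwq] at e2
      rw [hwne k (by omega) h4 (by omega)] at e2; omega
    by_cases hqk : q = k
    · rw [← hqk, hwq] at e1
      rw [hwne j (by omega) (by omega) (by omega)] at e1; omega
    by_cases hqj1 : q = j + 1
    · rw [← hqj1, hwq] at e3
      rw [hwne i (by omega) (by omega) (by omega)] at e3; omega
    by_cases hqj : q = j
    · rw [← hqj] at e1 e3 h2 h3
      rw [hwq, hwne k (by omega) h4 (by omega), if_neg (by omega)] at e1
      rw [hwne i (by omega) (by omega) (by omega), if_pos (by omega),
        hwne (q+1) (by omega) (by omega) (by omega), if_neg (by omega)] at e3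
      rw [hwne k (by omega) h4 (by omega), if_neg (by omega),
        hwne i (by omega) (by omega) (by omega), if_pos (by omega)] at e2
      simp only [Nat.add_sub_cancel] at e3
      exact hC1 ⟨i, k - 1, h1, by omega, by omega, by omega, by omega, by omega⟩
    · rw [hwne i (by omega) (by omega) hqi] at e2 e3
      rw [hwne j (by omega) (by omega) hqj] at e1
      rw [hwne k (by omega) h4 hqk] at e1 e2
      rw [hwne (j+1) (by omega) (by omega) hqj1] at e3
      have hJ1 : (if j + 1 < q then j + 1 else j + 1 - 1) = (if j < q then j else j - 1) + 1 := by
        split <;> split <;> omega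
      rw [hJ1] at e3
      refine hv1 ⟨if i < q then i else i - 1, if j < q then j else j - 1,
        if k < q then k else k - 1, ?_, ?_, ?_, ?_, by omega, by omega, by omega⟩ <;>
        · split <;> (try split) <;> omega
  · rintro ⟨i, j, k, h1, h2, h3, h4, e1, e2, e3⟩
    by_cases hqi : q = i
    · rw [← hqi, hwq] at e1
      rw [hwne (j+1) (by omega) (by omega) (by omega)] at e1; omega
    by_cases hqk : q = k
    · rw [← hqk, hwq] at e2
      rw [hwne i (by omega) (by omega) (by omega)] at e2; omega
    by_cases hqj : q = j
    · rw [← hqj, hwq] at e3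
      rw [hwne k (by omega) h4 (by omega)] at e3; omega
    by_cases hqj1 : q = j + 1
    · rw [hwne i (by omega) (by omega) hqi, if_pos (by omega)] at e2
      rw [hwne k (by omega) h4 hqk, if_neg (by omega)] at e2 e3
      rw [hwne j (by omega) (by omega) hqj, if_pos (by omega)] at e3
      have hjq : j = q - 1 := by omega
      rw [hjq] at e3
      exact hC2 ⟨i, k - 1, h1, by omega, by omega, by omega, by omega, by omega⟩
    · rw [hwne i (by omega) (by omega) hqi] at e1 e2
      rw [hwne j (by omega) (by omega) hqj] at e3
      rw [hwne k (by omega) h4 hqk] at e2 e3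
      rw [hwne (j+1) (by omega) (by omega) hqj1] at e1
      have hJ1 : (if j + 1 < q then j + 1 else j + 1 - 1) = (if j < q then j else j - 1) + 1 := by
        split <;> split <;> omega
      rw [hJ1] at e1
      refine hv2 ⟨if i < q then i else i - 1, if j < q then j else j - 1,
        if k < q then k else k - 1, ?_, ?_, ?_, ?_, by omega, by omega, by omega⟩ <;>
        · split <;> (try split) <;> omega

/-- If `w` is a Baxter permutation of length `n` fixed under half-turn rotation
and inserting the new largest label `n+1` at position `p` yields a Baxter permutation, then
there is a position `q` such that inserting `n+1` at `p` and then a new smallest label `1`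
at `q` yields a Baxter permutation of length `n+2` fixed under half-turn rotation. -/
theorem halfFixed_insert_pair (n : ℕ) (l : List ℕ)
    (hb : IsBaxter n l) (hf : HalfFixed n l)
    (p : ℕ) (hp1 : 1 ≤ p) (hp2 : p ≤ n + 1)
    (hins : IsBaxter (n + 1) (insertMax n p l)) :
    ∃ q, 1 ≤ q ∧ q ≤ n + 2 ∧
      IsBaxter (n + 2) (insertMin q (insertMax n p l)) ∧
      HalfFixed (n + 2) (insertMin q (insertMax n p l)) := by
  have hlP : IsPermWord n l := hb.1
  have hlen : l.length = n := permword_length hlP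
  have hvP : IsPermWord (n+1) (insertMax n p l) := hins.1
  set v := insertMax n p l with hvdef
  have hle : ∀ i, entry l i ≤ n := entry_le hlP
  have hge : ∀ i, 1 ≤ i → i ≤ n → 1 ≤ entry l i := fun i a b => (entry_bounds hlP a b).1
  have hinj : ∀ a b, 1 ≤ a → a ≤ n → 1 ≤ b → b ≤ n → entry l a = entry l b → a = b :=
    fun a b c d e f g => entry_inj hlP c d e f g
  have hvE : ∀ i, 1 ≤ i → entry v i =
      if i ≤ p - 1 then entry l i else if i = p - 1 + 1 then n + 1 else entry l (i-1) := by
    intro i h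
    rw [hvdef]
    exact entry_insertIdx l (p-1) (n+1) i (by omega) h
  have hvlt : ∀ x, 1 ≤ x → x < p → entry v x = entry l x := by
    intro x h1 h2; rw [hvE x h1, if_pos (by omega)]
  have hvp : entry v p = n + 1 := by
    rw [hvE p hp1, if_neg (by omega), if_pos (by omega)]
  have hvgt : ∀ x, p < x → entry v x = entry l (x-1) := by
    intro x h2; rw [hvE x (by omega), if_neg (by omega), if_neg (by omega)]
  have hP1 : ∀ a c, 1 ≤ a → a + 1 < p → p ≤ c → c ≤ n →
      entry l (p-1) < entry l c → entry l c < entry l a → False := by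
    intro a c ha1 ha2 hc1 hc2 e1 e2
    refine hins.2.1 ⟨a, p-1, c+1, ha1, by omega, by omega, by omega, ?_, ?_, ?_⟩
    · rw [hvlt (p-1) (by omega) (by omega), hvgt (c+1) (by omega),
        show c+1-1 = c from by omega]
      exact e1
    · rw [hvgt (c+1) (by omega), hvlt a ha1 (by omega), show c+1-1 = c from by omega]
      exact e2
    · rw [show p-1+1 = p from by omega, hvp, hvlt a ha1 (by omega)]
      have := hle a; omega
  have hP2 : ∀ a c, 1 ≤ a → a < p → p + 1 ≤ c → c ≤ n →
      entry l p < entry l a → entry l a < entry l c → False := by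
    intro a c ha1 ha2 hc1 hc2 e1 e2
    refine hins.2.2 ⟨a, p, c+1, ha1, ha2, by omega, by omega, ?_, ?_, ?_⟩
    · rw [hvgt (p+1) (by omega), hvlt a ha1 ha2, show p+1-1 = p from by omega]
      exact e1
    · rw [hvlt a ha1 ha2, hvgt (c+1) (by omega), show c+1-1 = c from by omega]
      exact e2
    · rw [hvgt (c+1) (by omega), hvp, show c+1-1 = c from by omega]
      have := hle c; omega
  have hwE : ∀ q x, 1 ≤ q → q ≤ n + 2 → 1 ≤ x → x ≤ n + 2 →
      entry (insertMin q v) x =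
        if x < q then entry v x + 1 else if x = q then 1 else entry v (x-1) + 1 := by
    intro q x hq1 hq2 hx1 hx2
    exact entry_insertMin hvP hq1 (by omega) x hx1 (by omega)
  have hwlt : ∀ q x, q ≤ n + 2 → 1 ≤ x → x < q →
      entry (insertMin q v) x = entry v x + 1 := by
    intro q x hq2 hx1 hxq
    rw [hwE q x (by omega) hq2 hx1 (by omega), if_pos hxq]
  have hwq0 : ∀ q, 1 ≤ q → q ≤ n + 2 → entry (insertMin q v) q = 1 := by
    intro q hq1 hq2
    rw [hwE q q hq1 hq2 hq1 hq2, if_neg (by omega), if_pos rfl]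
  have hwgt : ∀ q x, 1 ≤ q → q < x → x ≤ n + 2 →
      entry (insertMin q v) x = entry v (x-1) + 1 := by
    intro q x hq1 hqx hx2
    rw [hwE q x hq1 (by omega) (by omega) hx2, if_neg (by omega), if_neg (by omega)]
  have halfA : ∀ q, p < q → p + q = n + 3 → HalfFixed (n+2) (insertMin q v) := by
    intro q hpq hq i hi1 hi2
    rw [show n + 2 + 1 = n + 3 from by omega]
    rcases Nat.lt_trichotomy i p with hip | hip | hip
    · rw [hwgt q (n+3-i) (by omega) (by omega) (by omega),
        hvgt (n+3-i-1) (by omega),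
        show n+3-i-1-1 = n+1-i from by omega,
        hwlt q i (by omega) hi1 (by omega),
        hvlt i hi1 hip,
        hf i hi1 (by omega)]
      have := hle i; omega
    · rw [hip, show n+3-p = q from by omega, hwq0 q (by omega) (by omega),
        hwlt q p (by omega) (by omega) (by omega), hvp]
      omega
    · rcases Nat.lt_trichotomy i q with hiq | hiq | hiq
      · rw [hwlt q (n+3-i) (by omega) (by omega) (by omega),
          hvgt (n+3-i) (by omega),
          hwlt q i (by omega) (by omega) hiq,
          hvgt i hip,
          show n+3-i-1 = n+1-(i-1) from by omega,
          hf (i-1) (by omega) (by omega)]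
        have := hle (i-1); omega
      · rw [hiq, show n+3-q = p from by omega,
          hwlt q p (by omega) (by omega) (by omega), hvp,
          hwq0 q (by omega) (by omega)]
        omega
      · rw [hwlt q (n+3-i) (by omega) (by omega) (by omega),
          hvlt (n+3-i) (by omega) (by omega),
          hwgt q i (by omega) hiq hi2,
          hvgt (i-1) (by omega),
          show i-1-1 = i-2 from by omega,
          show n+3-i = n+1-(i-2) from by omega,
          hf (i-2) (by omega) (by omega)]
        have := hle (i-2); omega
  have halfB : ∀ q, 1 ≤ q → q ≤ p → p + q = n + 2 → HalfFixed (n+2) (insertMin q v) := by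
    intro q hq1 hqp hq i hi1 hi2
    rw [show n + 2 + 1 = n + 3 from by omega]
    rcases Nat.lt_trichotomy i q with hiq | hiq | hiq
    · rw [hwgt q (n+3-i) hq1 (by omega) (by omega),
        hvgt (n+3-i-1) (by omega),
        show n+3-i-1-1 = n+1-i from by omega,
        hwlt q i (by omega) hi1 hiq,
        hvlt i hi1 (by omega),
        hf i hi1 (by omega)]
      have := hle i; omega
    · rw [hiq, show n+3-q = p+1 from by omega,
        hwgt q (p+1) hq1 (by omega) (by omega),
        show p+1-1 = p from by omega, hvp,
        hwq0 q hq1 (by omega)]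
      omega
    · rcases Nat.lt_trichotomy i (p+1) with hip | hip | hip
      · rw [hwgt q (n+3-i) hq1 (by omega) (by omega),
          hvlt (n+3-i-1) (by omega) (by omega),
          hwgt q i hq1 hiq (by omega),
          hvlt (i-1) (by omega) (by omega),
          show n+3-i-1 = n+1-(i-1) from by omega,
          hf (i-1) (by omega) (by omega)]
        have := hle (i-1); omega
      · rw [hip, show n+3-(p+1) = q from by omega,
          hwq0 q hq1 (by omega),
          hwgt q (p+1) hq1 (by omega) (by omega),
          show p+1-1 = p from by omega, hvp]
        omega
      · rw [hwlt q (n+3-i) (by omega) (by omega) (by omega),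
          hvlt (n+3-i) (by omega) (by omega),
          hwgt q i hq1 (by omega) hi2,
          hvgt (i-1) (by omega),
          show i-1-1 = i-2 from by omega,
          show n+3-i = n+1-(i-2) from by omega,
          hf (i-2) (by omega) (by omega)]
        have := hle (i-2); omega
  rcases Nat.lt_trichotomy (2*p) (n+2) with hcase | hcase | hcase
  · -- q = n+3-p, inserted 1 strictly after the mirror of the max
    refine ⟨n+3-p, by omega, by omega, ?_, halfA (n+3-p) (by omega) (by omega)⟩
    refine isBaxter_insertMin hins (by omega) (by omega) ?_ ?_
    · rintro ⟨i, k, hi1, hiq, hqk, hkn, e1, e2⟩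
      rcases Nat.lt_or_ge p 2 with hpa | hpa
      · omega
      rw [hvgt (n+3-p) (by omega), show n+3-p-1 = n+2-p from by omega] at e2
      have hfq := hf (p-1) (by omega) (by omega)
      rw [show n+1-(p-1) = n+2-p from by omega] at hfq
      have hlq := hle (n+2-p)
      have hlp1 := hle (p-1)
      by_cases hip0 : i = p
      · rw [hip0, hvp] at e2; omega
      rw [hvgt k (by omega)] at e1
      have hfk := hf (k-1) (by omega) (by omega)
      have hlk := hle (k-1)
      rcases Nat.lt_or_ge i p with hip | hip
      · rw [hvlt i hi1 hip] at e1 e2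
        have hfi := hf i hi1 (by omega)
        have hli := hle i
        exact hP1 (n+1-(k-1)) (n+1-i) (by omega) (by omega) (by omega) (by omega)
          (by omega) (by omega)
      · rw [hvgt i (by omega)] at e1 e2
        have hfi := hf (i-1) (by omega) (by omega)
        have hli := hle (i-1)
        exact hP1 (n+1-(k-1)) (n+1-(i-1)) (by omega) (by omega) (by omega) (by omega)
          (by omega) (by omega)
    · rintro ⟨i, k, hi1, hiq, hqk, hkn, e1, e2⟩
      rcases Nat.lt_or_ge p 2 with hpa | hpa
      · omega
      rw [hvgt (n+3-p-1) (by omega), show n+3-p-1-1 = n+1-p from by omega] at e2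
      have hfp := hf p (by omega) (by omega)
      have hlq := hle (n+1-p)
      have hlp := hle p
      by_cases hip0 : i = p
      · rw [hip0, hvp, hvgt k (by omega)] at e1
        have := hle (k-1); omega
      rw [hvgt k (by omega)] at e1 e2
      have hfk := hf (k-1) (by omega) (by omega)
      have hlk := hle (k-1)
      rcases Nat.lt_or_ge i p with hip | hip
      · rw [hvlt i hi1 hip] at e1
        have hfi := hf i hi1 (by omega)
        have hli := hle i
        exact hP2 (n+1-(k-1)) (n+1-i) (by omega) (by omega) (by omega) (by omega)
          (by omega) (by omega)
      · rw [hvgt i (by omega)] at e1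
        have hfi := hf (i-1) (by omega) (by omega)
        have hli := hle (i-1)
        exact hP2 (n+1-(k-1)) (n+1-(i-1)) (by omega) (by omega) (by omega) (by omega)
          (by omega) (by omega)
  · -- 2p = n+2 : boundary case
    rcases Nat.lt_or_ge p 2 with hpa | hpa
    · -- p = 1, n = 0
      refine ⟨1, by omega, by omega, ?_, halfB 1 (by omega) (by omega) (by omega)⟩
      refine isBaxter_insertMin hins (by omega) (by omega) ?_ ?_
      · rintro ⟨i, k, hi1, hiq, hqk, hkn, e1, e2⟩; omega
      · rintro ⟨i, k, hi1, hiq, hqk, hkn, e1, e2⟩; omega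
    · have hsum := hf p (by omega) (by omega)
      rw [show n+1-p = p-1 from by omega] at hsum
      have hgp := hge p (by omega) (by omega)
      have hlp := hle p
      have hgp1 := hge (p-1) (by omega) (by omega)
      have hlp1 := hle (p-1)
      rcases Nat.lt_or_ge (entry l p) (entry l (p-1)) with hd | hd
      · -- middle descent : q = p+1
        have hsmall : ∀ a, 1 ≤ a → a ≤ p-1 → entry l a < entry l p → False := by
          intro a ha1 ha2 hlt
          rcases Nat.lt_or_ge a (p-1) with haa | haa
          · have hfa := hf a ha1 (by omega)
            have hla := hle a
            exact hP2 (p-1) (n+1-a) (by omega) (by omega) (by omega) (by omega)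
              (by omega) (by omega)
          · have haa2 : a = p-1 := by omega
            rw [haa2] at hlt; omega
        refine ⟨p+1, by omega, by omega, ?_, halfA (p+1) (by omega) (by omega)⟩
        refine isBaxter_insertMin hins (by omega) (by omega) ?_ ?_
        · rintro ⟨i, k, hi1, hiq, hqk, hkn, e1, e2⟩
          rw [hvgt (p+1) (by omega), show p+1-1 = p from by omega] at e2
          by_cases hip0 : i = p
          · rw [hip0, hvp] at e2; omega
          · rw [hvlt i hi1 (by omega)] at e2
            exact hsmall i hi1 (by omega) e2
        · rintro ⟨i, k, hi1, hiq, hqk, hkn, e1, e2⟩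
          rw [hvlt i hi1 (by omega), hvgt k (by omega)] at e1
          rcases Nat.lt_trichotomy (entry l i) (entry l p) with h3 | h3 | h3
          · exact hsmall i hi1 (by omega) h3
          · have := hinj i p hi1 (by omega) (by omega) (by omega) h3; omega
          · rcases Nat.lt_or_ge p (k-1) with hkk | hkk
            · exact hP2 i (k-1) hi1 (by omega) (by omega) (by omega) h3 e1
            · have hkp : k - 1 = p := by omega
              rw [hkp] at e1; omega
      · -- middle ascent : q = p
        have hd' : entry l (p-1) < entry l p := by omega
        have hlarge : ∀ c, p ≤ c → c ≤ n → entry l c < entry l (p-1) → False := by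
          intro c hc1 hc2 hlt
          rcases Nat.lt_or_ge p c with hcc | hcc
          · have hfc := hf c (by omega) hc2
            have hlc := hle c
            exact hP1 (n+1-c) p (by omega) (by omega) (by omega) (by omega) hd' (by omega)
          · have hcp : c = p := by omega
            rw [hcp] at hlt; omega
        refine ⟨p, by omega, by omega, ?_, halfB p (by omega) (by omega) (by omega)⟩
        refine isBaxter_insertMin hins (by omega) (by omega) ?_ ?_
        · rintro ⟨i, k, hi1, hiq, hqk, hkn, e1, e2⟩
          rw [hvlt i hi1 hiq, hvgt k hqk] at e1
          rcases Nat.lt_trichotomy (entry l (k-1)) (entry l (p-1)) with h3 | h3 | h3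
          · exact hlarge (k-1) (by omega) (by omega) h3
          · have := hinj (k-1) (p-1) (by omega) (by omega) (by omega) (by omega) h3; omega
          · rcases Nat.lt_or_ge i (p-1) with hii | hii
            · exact hP1 i (k-1) hi1 (by omega) (by omega) (by omega) h3 e1
            · have hii2 : i = p-1 := by omega
              rw [hii2] at e1; omega
        · rintro ⟨i, k, hi1, hiq, hqk, hkn, e1, e2⟩
          rw [hvlt (p-1) (by omega) (by omega)] at e2
          rcases Nat.lt_or_ge p k with hkk | hkk
          · rw [hvgt k hkk] at e2
            exact hlarge (k-1) (by omega) (by omega) e2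
          · have hkp : k = p := by omega
            rw [hkp, hvp] at e2
            omega
  · -- 2p ≥ n+3 : q = n+2-p
    refine ⟨n+2-p, by omega, by omega, ?_, halfB (n+2-p) (by omega) (by omega) (by omega)⟩
    refine isBaxter_insertMin hins (by omega) (by omega) ?_ ?_
    · rintro ⟨i, k, hi1, hiq, hqk, hkn, e1, e2⟩
      rw [hvlt (n+2-p) (by omega) (by omega)] at e2
      have hfq := hf (p-1) (by omega) (by omega)
      rw [show n+1-(p-1) = n+2-p from by omega] at hfq
      have hlq := hle (n+2-p)
      have hlp1 := hle (p-1)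
      rw [hvlt i hi1 (by omega)] at e1 e2
      have hfi := hf i hi1 (by omega)
      have hli := hle i
      by_cases hkp : k = p
      · rw [hkp, hvp] at e1; omega
      rcases Nat.lt_or_ge k p with hkk | hkk
      · rw [hvlt k (by omega) hkk] at e1
        have hfk := hf k (by omega) (by omega)
        have hlk := hle k
        exact hP1 (n+1-k) (n+1-i) (by omega) (by omega) (by omega) (by omega)
          (by omega) (by omega)
      · rw [hvgt k (by omega)] at e1
        have hfk := hf (k-1) (by omega) (by omega)
        have hlk := hle (k-1)
        exact hP1 (n+1-(k-1)) (n+1-i) (by omega) (by omega) (by omega) (by omega)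
          (by omega) (by omega)
    · rintro ⟨i, k, hi1, hiq, hqk, hkn, e1, e2⟩
      rw [hvlt (n+2-p-1) (by omega) (by omega)] at e2
      have hfp := hf p (by omega) (by omega)
      rw [show n+1-p = n+2-p-1 from by omega] at hfp
      have hlq := hle (n+2-p-1)
      have hlp := hle p
      rw [hvlt i hi1 (by omega)] at e1
      have hfi := hf i hi1 (by omega)
      have hli := hle i
      by_cases hkp : k = p
      · rw [hkp, hvp] at e2; omega
      rcases Nat.lt_or_ge k p with hkk | hkk
      · rw [hvlt k (by omega) hkk] at e1 e2
        have hfk := hf k (by omega) (by omega)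
        have hlk := hle k
        exact hP2 (n+1-k) (n+1-i) (by omega) (by omega) (by omega) (by omega)
          (by omega) (by omega)
      · rw [hvgt k (by omega)] at e1 e2
        have hfk := hf (k-1) (by omega) (by omega)
        have hlk := hle (k-1)
        exact hP2 (n+1-(k-1)) (n+1-i) (by omega) (by omega) (by omega) (by omega)
          (by omega) (by omega)
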